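/- arXiv:2408.06992 — 2 statements merged into one kernel-verified Lean document; each statement's English description precedes it below -/
import Mathlib

section
/- Let T1 and T2 be tournaments with p and q vertices respectively, both even. Then det(T1 → T2) = det(T1) · det(T2), where T1 → T2 is the join obtained by adding an arc from every vertex of T1 to every vertex of T2. -/
open scoped Classical

/-- A tournament: irreflexive, and between distinct vertices exactly one arc. -/
def IsTournament {V : Type*} (r : V → V → Prop) : Prop :=
  (∀ i, ¬ r i i) ∧ ∀ i j, i ≠ j → (r i j ↔ ¬ r j i)

/-- Skew-adjacency matrix of a relation. -/
noncomputable def skew {V : Type*} (r : V → V → Prop) : Matrix V V ℤ :=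
  Matrix.of fun i j => if r i j then 1 else if r j i then -1 else 0

/-- Determinant of the skew-adjacency matrix. -/
noncomputable def tdet {V : Type*} [Fintype V] [DecidableEq V] (r : V → V → Prop) : ℤ :=
  (skew r).det

/-- Determinant of the subtournament induced by a finite vertex subset. -/
noncomputable def subdet {V : Type*} [Fintype V] [DecidableEq V] (r : V → V → Prop)
    (s : Finset V) : ℤ :=
  ((skew r).submatrix (fun x : {x // x ∈ s} => x.1) (fun x : {x // x ∈ s} => x.1)).det

/-- Switch of `r` with respect to `W`: arcs between `W` and its complement are reversed. -/
def switchRel {V : Type*} (r : V → V → Prop) (W : Set V) : V → V → Prop :=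
  fun i j => if (i ∈ W ↔ j ∈ W) then r i j else r j i

/-- Switching equivalence of two tournaments on the same vertex set. -/
def SwitchEquiv {V : Type*} (r₁ r₂ : V → V → Prop) : Prop :=
  ∃ W : Set V, ∀ i j, r₂ i j ↔ switchRel r₁ W i j

def IsTransitive {V : Type*} (r : V → V → Prop) : Prop :=
  ∀ a b c, r a b → r b c → r a c

def IsTransitiveOn {V : Type*} (r : V → V → Prop) (X : Finset V) : Prop :=
  ∀ a ∈ X, ∀ b ∈ X, ∀ c ∈ X, r a b → r b c → r a c

/-- A 4-set inducing a diamond: a vertex dominating or dominated by a 3-cycle. -/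
def IsDiamond {V : Type*} (r : V → V → Prop) (X : Finset V) : Prop :=
  ∃ a b c d : V, X = {a, b, c, d} ∧ a ≠ b ∧ a ≠ c ∧ a ≠ d ∧ b ≠ c ∧ b ≠ d ∧ c ≠ d ∧
    r b c ∧ r c d ∧ r d b ∧ ((r a b ∧ r a c ∧ r a d) ∨ (r b a ∧ r c a ∧ r d a))

/-- Number of diamonds of a tournament. -/
noncomputable def numDiamonds {V : Type*} [Fintype V] (r : V → V → Prop) : ℕ :=
  Set.ncard {X : Finset V | IsDiamond r X}

/-- The tournament `L_n`: a transitive chain `u_0 → ⋯ → u_{n-2}` together with a last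
vertex alternating along the chain, starting with `u_{n-1} → u_0`. -/
def LRel (n : ℕ) : Fin n → Fin n → Prop := fun i j =>
  (j.val < n - 1 ∧ i.val < j.val) ∨
  (j.val = n - 1 ∧ i.val < n - 1 ∧ i.val % 2 = 1) ∨
  (i.val = n - 1 ∧ j.val < n - 1 ∧ j.val % 2 = 0)

/-- Join of two tournaments: all arcs from the first to the second. -/
def joinRel {A B : Type*} (r : A → A → Prop) (s : B → B → Prop) : A ⊕ B → A ⊕ B → Prop :=
  fun x y => match x, y with
  | .inl a, .inl a' => r a a'
  | .inr b, .inr b' => s b b'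
  | .inl _, .inr _ => True
  | .inr _, .inl _ => False

/-- `T⁺`: add one new vertex dominated by every vertex of `T`. -/
def plusRel {A : Type*} (r : A → A → Prop) : Option A → Option A → Prop :=
  fun x y => match x, y with
  | some a, some b => r a b
  | some _, none => True
  | _, _ => False

/-- Blowup of `r` by the family of tournaments `t`. -/
def blowupG {ι : Type*} [DecidableEq ι] (r : ι → ι → Prop) {κ : ι → Type*}
    (t : ∀ i, κ i → κ i → Prop) : (Σ i, κ i) → (Σ i, κ i) → Prop :=
  fun x y => if h : x.1 = y.1 then t y.1 (h ▸ x.2) y.2 else r x.1 y.1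

/-- Transitive `(a_1,…,a_n)`-blowup of `r`. -/
def blowup {ι : Type*} [DecidableEq ι] (r : ι → ι → Prop) (a : ι → ℕ) :
    (Σ i, Fin (a i)) → (Σ i, Fin (a i)) → Prop :=
  blowupG r (fun _ p q => p < q)

/-- Membership in `𝒟_k`: every subtournament has determinant at most `k²`. -/
def memD {V : Type*} [Fintype V] [DecidableEq V] (r : V → V → Prop) (k : ℕ) : Prop :=
  ∀ s : Finset V, subdet r s ≤ (k : ℤ) ^ 2

/-
The skew-adjacency matrix of `T₁ → T₂` is the block matrix `[[A, J], [-Jᵀ, D]]` with `J` the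
all-ones matrix. Since `p` is even, `det A` is odd (modulo 2, `A ≡ I + 𝟙𝟙ᵀ`, of determinant
`1 + p`), so `A` is invertible over `ℚ` and the Schur complement formula gives
`det = det A · det (D + (𝟙ᵀ A⁻¹ 𝟙) J)`. Finally `𝟙ᵀ A⁻¹ 𝟙 = wᵀ A w` for `w = A⁻¹ 𝟙`,
which vanishes because `A` is skew-symmetric.
-/

open Matrix

namespace Matrix

variable {m n : Type*} [Fintype m] [Fintype n]

theorem dotProduct_mulVec_self_eq_zero_of_transpose_eq_neg {R : Type*} [CommRing R]
    [IsAddTorsionFree R] {A : Matrix m m R} (hA : Aᵀ = -A) (v : m → R) :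
    v ⬝ᵥ A *ᵥ v = 0 := by
  rw [← self_eq_neg]
  calc v ⬝ᵥ A *ᵥ v = v ⬝ᵥ Aᵀ *ᵥ v := by
        rw [dotProduct_mulVec, dotProduct_comm, ← vecMul_transpose, transpose_transpose]
    _ = -(v ⬝ᵥ A *ᵥ v) := by rw [hA, neg_mulVec, dotProduct_neg]

theorem det_fromBlocks_vecMulVec_of_transpose_eq_neg [DecidableEq m] [DecidableEq n]
    {K : Type*} [Field K] [CharZero K]
    {A : Matrix m m K} (hA : Aᵀ = -A) (hdet : A.det ≠ 0) (u : m → K) (x y : n → K)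
    (D : Matrix n n K) :
    (fromBlocks A (vecMulVec u x) (vecMulVec y u) D).det = A.det * D.det := by
  let := invertibleOfIsUnitDet A (isUnit_iff_ne_zero.mpr hdet)
  have hu : u ⬝ᵥ ⅟A *ᵥ u = 0 := by
    set w := ⅟A *ᵥ u
    have hw : A *ᵥ w = u := by rw [mulVec_mulVec, mul_invOf_self, one_mulVec]
    rw [← hw, dotProduct_comm]
    exact dotProduct_mulVec_self_eq_zero_of_transpose_eq_neg hA w
  rw [det_fromBlocks₁₁, vecMulVec_mul, vecMulVec_mul_vecMulVec, ← dotProduct_mulVec, hu,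
    zero_smul, vecMulVec_zero, sub_zero]

end Matrix

variable {V : Type*}

theorem IsTournament.skew_transpose {r : V → V → Prop} (hr : IsTournament r) :
    (skew r)ᵀ = -skew r := by
  ext i j
  by_cases hij : i = j
  · subst hij; simp [skew, hr.1 i]
  · have := hr.2 i j hij
    by_cases h : r i j <;> simp_all [skew]

theorem skew_joinRel {A B : Type*} (r : A → A → Prop) (s : B → B → Prop) :
    skew (joinRel r s) = fromBlocks (skew r) (vecMulVec 1 1) (vecMulVec (-1) 1) (skew s) := by
  ext (i | i) (j | j) <;> simp [skew, joinRel, vecMulVec] <;>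
    congr -- the remaining sides differ only in their `Decidable` instances

theorem IsTournament.skew_map_intCast_zmod_two [DecidableEq V] {r : V → V → Prop}
    (hr : IsTournament r) : (skew r).map (Int.cast : ℤ → ZMod 2) = 1 + vecMulVec 1 1 := by
  ext i j
  by_cases hij : i = j
  · subst hij; simp [skew, hr.1 i]; decide
  · have := hr.2 i j hij
    by_cases h : r i j <;> simp_all [skew, vecMulVec]

theorem IsTournament.odd_tdet [Fintype V] [DecidableEq V] {r : V → V → Prop}
    (hr : IsTournament r) (hV : Even (Fintype.card V)) : Odd (tdet r) := by
  rw [← ZMod.intCast_eq_one_iff_odd, tdet, Int.cast_det, hr.skew_map_intCast_zmod_two,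
    vecMulVec_eq Unit, det_one_add_replicateCol_mul_replicateRow]
  simp [(ZMod.natCast_eq_zero_iff_even).mpr hV]

theorem stmt2_general {p q : ℕ} (hp : Even p)
    (r : Fin p → Fin p → Prop) (s : Fin q → Fin q → Prop)
    (hr : IsTournament r) :
    tdet (joinRel r s) = tdet r * tdet s := by
  have hskew : ((skew r).map (Int.cast : ℤ → ℚ))ᵀ = -(skew r).map Int.cast := by
    rw [← transpose_map, hr.skew_transpose, Matrix.map_neg _ Int.cast_neg]
  have hA : ((skew r).map (Int.cast : ℤ → ℚ)).det ≠ 0 := by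
    rw [← Int.cast_det, Int.cast_ne_zero]
    intro h0
    simpa [tdet, h0] using hr.odd_tdet (by simpa using hp)
  apply Int.cast_injective (α := ℚ)
  rw [Int.cast_mul, tdet, tdet, tdet, Int.cast_det, Int.cast_det, Int.cast_det, skew_joinRel,
    fromBlocks_map]
  convert det_fromBlocks_vecMulVec_of_transpose_eq_neg hskew hA 1 1 (-1) _ using 3 <;> ext <;>
    simp [vecMulVec]

theorem stmt2 {p q : ℕ} (hp : Even p) (hq : Even q)
    (r : Fin p → Fin p → Prop) (s : Fin q → Fin q → Prop)
    (hr : IsTournament r) (hs : IsTournament s) :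
    tdet (joinRel r s) = tdet r * tdet s :=
  stmt2_general hp r s hr
end

section
/- Let T be a tournament on 6 vertices with fewer than 6 diamonds (δ_T < 6). Then T is switching equivalent to a tournament containing a transitive subtournament on 5 vertices. -/
open scoped Classical

/-!
Switching at the in-neighbourhood of a vertex `u` makes `u` a source, so every 3-cycle `C`
avoiding `u` then spans a diamond with `u`; checking which vertices of `C` are in-neighbours
of `u` shows that `C ∪ {u}` is a diamond of the original tournament too. Hence if no diamond
inside a vertex set `Y` contains `u`, this switch makes `Y` transitive. Each diamond misses
exactly two of the six vertices, so when `δ_T < 6` some vertex `w` is missed by at most one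
diamond, and then some `u ≠ w` lies in every diamond that misses `w`: take `Y = V ∖ {w}`.
-/

section Switching

variable {V : Type*} {r : V → V → Prop}

lemma switchRel_of_iff {W : Set V} {x y : V} (h : x ∈ W ↔ y ∈ W) :
    switchRel r W x y ↔ r x y := by
  simp only [switchRel, if_pos h]

lemma switchRel_of_not_iff {W : Set V} {x y : V} (h : ¬(x ∈ W ↔ y ∈ W)) :
    switchRel r W x y ↔ r y x := by
  simp only [switchRel, if_neg h]

lemma IsTournament.switchRel (hT : IsTournament r) (W : Set V) :
    IsTournament (switchRel r W) := by
  refine ⟨fun x => by simpa only [switchRel_of_iff Iff.rfl] using hT.1 x, fun x y hxy => ?_⟩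
  by_cases h : x ∈ W ↔ y ∈ W
  · rw [switchRel_of_iff h, switchRel_of_iff h.symm]
    exact hT.2 x y hxy
  · rw [switchRel_of_not_iff h, switchRel_of_not_iff (mt Iff.symm h)]
    exact hT.2 y x hxy.symm

lemma IsTournament.ne_of_rel (hT : IsTournament r) {x y : V} (h : r x y) : x ≠ y := by
  rintro rfl
  exact hT.1 x h

lemma IsTournament.rel_of_not_rel (hT : IsTournament r) {x y : V} (hne : x ≠ y)
    (h : ¬r x y) : r y x :=
  (hT.2 y x hne.symm).2 h

lemma IsTournament.not_rel_of_rel (hT : IsTournament r) {x y : V} (h : r x y) : ¬r y x :=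
  (hT.2 x y (hT.ne_of_rel h)).1 h

lemma isDiamond_of_cycle (hirr : ∀ x, ¬r x x) {a b c d : V} (hbc : r b c) (hcd : r c d)
    (hdb : r d b) (hdom : (r a b ∧ r a c ∧ r a d) ∨ (r b a ∧ r c a ∧ r d a)) :
    IsDiamond r {a, b, c, d} := by
  have ne : ∀ {x y}, r x y → x ≠ y := fun h hxy => hirr _ (hxy ▸ h)
  have hab : a ≠ b ∧ a ≠ c ∧ a ≠ d := by
    rcases hdom with ⟨h₁, h₂, h₃⟩ | ⟨h₁, h₂, h₃⟩
    · exact ⟨ne h₁, ne h₂, ne h₃⟩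
    · exact ⟨(ne h₁).symm, (ne h₂).symm, (ne h₃).symm⟩
  exact ⟨a, b, c, d, rfl, hab.1, hab.2.1, hab.2.2, ne hbc, (ne hdb).symm, ne hcd,
    hbc, hcd, hdb, hdom⟩

lemma isDiamond_of_switchRel_cycle (hT : IsTournament r) {u a b c : V} (hau : a ≠ u)
    (hbu : b ≠ u) (hcu : c ≠ u) (hab : switchRel r {x | r x u} a b)
    (hbc : switchRel r {x | r x u} b c) (hca : switchRel r {x | r x u} c a) :
    IsDiamond r {u, a, b, c} := by
  have out : ∀ {x}, x ≠ u → ¬r x u → r u x := fun hx h => hT.rel_of_not_rel hx h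
  have rot {x y z : V} : ({u, x, y, z} : Finset V) = {x, y, u, z} := by
    ext; simp only [Finset.mem_insert, Finset.mem_singleton]; tauto
  have rot' {x y z : V} : ({u, x, y, z} : Finset V) = {z, x, u, y} := by
    ext; simp only [Finset.mem_insert, Finset.mem_singleton]; tauto
  have rot'' {x y z : V} : ({u, x, y, z} : Finset V) = {y, z, u, x} := by
    ext; simp only [Finset.mem_insert, Finset.mem_singleton]; tauto
  -- the apex is `u` if `a, b, c` lie on one side of the switch, else the one alone on its side
  by_cases ha : r a u <;> by_cases hb : r b u <;> by_cases hc : r c u <;>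
    simp only [switchRel, Set.mem_ofPred_eq, ha, hb, hc, iff_self, iff_true, iff_false,
      not_true, if_true, if_false] at hab hbc hca
  · exact isDiamond_of_cycle hT.1 hab hbc hca (Or.inr ⟨ha, hb, hc⟩)
  · rw [rot]; exact isDiamond_of_cycle hT.1 hb (out hcu hc) hbc (Or.inl ⟨hab, ha, hca⟩)
  · rw [rot']; exact isDiamond_of_cycle hT.1 ha (out hbu hb) hab (Or.inl ⟨hca, hc, hbc⟩)
  · rw [rot']; exact isDiamond_of_cycle hT.1 ha (out hbu hb) hab (Or.inr ⟨hca, out hcu hc, hbc⟩)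
  · rw [rot'']; exact isDiamond_of_cycle hT.1 hc (out hau ha) hca (Or.inl ⟨hbc, hb, hab⟩)
  · rw [rot]; exact isDiamond_of_cycle hT.1 hb (out hcu hc) hbc (Or.inr ⟨hab, out hau ha, hca⟩)
  · rw [rot'']; exact isDiamond_of_cycle hT.1 hc (out hau ha) hca (Or.inr ⟨hbc, out hbu hb, hab⟩)
  · exact isDiamond_of_cycle hT.1 hab hbc hca (Or.inl ⟨out hau ha, out hbu hb, out hcu hc⟩)

lemma isTransitiveOn_switchRel_of_forall_not_isDiamond (hT : IsTournament r) {Y : Finset V}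
    {u : V} (hY : ∀ a ∈ Y, ∀ b ∈ Y, ∀ c ∈ Y, ¬IsDiamond r {u, a, b, c}) :
    IsTransitiveOn (switchRel r {x | r x u}) Y := by
  have hs := hT.switchRel {x | r x u}
  have hu : u ∉ {x | r x u} := hT.1 u
  have source : ∀ x, ¬switchRel r {x | r x u} x u := by
    intro x hxu
    by_cases hx : r x u
    · exact hT.not_rel_of_rel hx ((switchRel_of_not_iff (by simpa [hx] using hu)).1 hxu)
    · exact hx ((switchRel_of_iff (by simpa [hx] using hu)).1 hxu)
  intro a ha b hb c hc hab hbc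
  by_contra hac
  have hca := hs.rel_of_not_rel (fun h : a = c => hs.not_rel_of_rel hab (h ▸ hbc)) hac
  exact hY a ha b hb c hc (isDiamond_of_switchRel_cycle hT (fun h => source c (h ▸ hca))
    (fun h => source a (h ▸ hab)) (fun h => source b (h ▸ hbc)) hab hbc hca)

end Switching

lemma IsDiamond.card_eq_four {V : Type*} {r : V → V → Prop} {X : Finset V}
    (h : IsDiamond r X) : X.card = 4 := by
  obtain ⟨a, b, c, d, rfl, hab, hac, had, hbc, hbd, hcd, -⟩ := h
  exact Finset.card_eq_four.2 ⟨a, b, c, d, hab, hac, had, hbc, hbd, hcd, rfl⟩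

section Counting

open Finset

variable {V : Type*} [Fintype V]

lemma sum_card_filter_notMem (D : Finset (Finset V)) :
    ∑ w, #{X ∈ D | w ∉ X} = ∑ X ∈ D, #Xᶜ := by
  simp only [card_filter]
  rw [sum_comm]
  refine sum_congr rfl fun X _ => ?_
  rw [compl_eq_univ_sdiff, ← filter_notMem_eq_sdiff, card_filter]

lemma exists_ne_forall_mem_imp_mem (hV : Fintype.card V = 6) {D : Finset (Finset V)}
    (hD : ∀ X ∈ D, #X = 4) (hDcard : #D < 6) :
    ∃ u w, u ≠ w ∧ ∀ X ∈ D, u ∈ X → w ∈ X := by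
  have hsum : ∑ w, #{X ∈ D | w ∉ X} < ∑ _w : V, 2 := by
    rw [sum_card_filter_notMem, sum_const, card_univ, hV,
      sum_congr rfl fun X hX => by rw [card_compl, hV, hD X hX], sum_const]
    simp only [smul_eq_mul]
    omega
  obtain ⟨w, -, hw⟩ := exists_lt_of_sum_lt hsum
  set A := {X ∈ D | w ∉ X}
  have hcover : #(insert w (A.biUnion id)) < #(univ : Finset V) := by
    have hA : ∑ X ∈ A, #X = 4 * #A := by
      rw [sum_congr rfl fun X hX => hD X (mem_filter.1 hX).1, sum_const, smul_eq_mul, mul_comm]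
    calc #(insert w (A.biUnion id)) ≤ #(A.biUnion id) + 1 := card_insert_le _ _
      _ ≤ ∑ X ∈ A, #X + 1 := by gcongr; exact card_biUnion_le
      _ < #(univ : Finset V) := by rw [hA, card_univ, hV]; omega
  obtain ⟨u, -, hu⟩ := exists_mem_notMem_of_card_lt_card hcover
  refine ⟨u, w, fun h => hu (h ▸ mem_insert_self _ _), fun X hX huX => ?_⟩
  by_contra hwX
  exact hu (mem_insert_of_mem (mem_biUnion.2 ⟨X, mem_filter.2 ⟨hX, hwX⟩, huX⟩))

end Counting

theorem stmt10_general {V : Type*} [Fintype V] (r : V → V → Prop)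
    (hT : IsTournament r) (hcard : Fintype.card V = 6) (hδ : numDiamonds r < 6) :
    ∃ (W : Set V) (X : Finset V), X.card = 5 ∧ IsTransitiveOn (switchRel r W) X := by
  set D := Finset.univ.filter (IsDiamond r)
  have hD : numDiamonds r = D.card := by
    rw [numDiamonds, ← Set.ncard_coe_finset]
    congr
    ext X
    simp [D]
  obtain ⟨u, w, huw, hw⟩ := exists_ne_forall_mem_imp_mem hcard
    (fun X hX => (Finset.mem_filter.1 hX).2.card_eq_four) (hD ▸ hδ)
  refine ⟨{x | r x u}, Finset.univ.erase w, by simp [hcard],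
    isTransitiveOn_switchRel_of_forall_not_isDiamond hT fun a ha b hb c hc hd => ?_⟩
  have hwX := hw _ (Finset.mem_filter.2 ⟨Finset.mem_univ _, hd⟩) (Finset.mem_insert_self _ _)
  simp only [Finset.mem_insert, Finset.mem_singleton] at hwX
  rcases hwX with h | h | h | h
  exacts [huw h.symm, Finset.ne_of_mem_erase ha h.symm, Finset.ne_of_mem_erase hb h.symm,
    Finset.ne_of_mem_erase hc h.symm]

theorem stmt10 {V : Type*} [Fintype V] [DecidableEq V] (r : V → V → Prop)
    (hT : IsTournament r) (hcard : Fintype.card V = 6) (hδ : numDiamonds r < 6) :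
    ∃ (W : Set V) (X : Finset V), X.card = 5 ∧ IsTransitiveOn (switchRel r W) X :=
  stmt10_general r hT hcard hδ
end
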